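/- arXiv:0909.4441 — 2 statements merged into one kernel-verified Lean document; each statement's English description precedes it below -/
import Mathlib

section
/- Let P be an incomplete weighted profile over a finite set of candidates and let U(P) be its corresponding unweighted profile. Then the strong possible winners of U(P) are contained in those of P: SP(U(P)) ⊆ SP(P). -/
open scoped Classical

/-- An agenda: a binary tree whose leaves are labelled with candidates. -/
inductive Agenda (α : Type) : Type
  | leaf (a : α) : Agenda α
  | node (l r : Agenda α) : Agenda α

namespace Agenda

/-- The list of leaf labels of an agenda. -/
def leaves {α : Type} : Agenda α → List α
  | leaf a => [a]
  | node l r => leaves l ++ leaves r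

/-- The list of depths of the leaves of an agenda. -/
def depths {α : Type} : Agenda α → List ℕ
  | leaf _ => [0]
  | node l r => (depths l ++ depths r).map (· + 1)

end Agenda

/-- A valid agenda: leaves labelled bijectively with the candidates. -/
def IsAgenda {α : Type} [Fintype α] (t : Agenda α) : Prop :=
  t.leaves.Nodup ∧ ∀ a : α, a ∈ t.leaves

/-- A balanced agenda: max and min leaf depths differ by at most 1. -/
def IsBalanced {α : Type} (t : Agenda α) : Prop :=
  ∀ d₁ ∈ t.depths, ∀ d₂ ∈ t.depths, d₁ ≤ d₂ + 1

/-- A tournament: complete asymmetric directed graph on the candidates. -/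
def IsTournament {α : Type} (T : α → α → Prop) : Prop :=
  (∀ a, ¬ T a a) ∧ ∀ a b : α, a ≠ b → (T a b ↔ ¬ T b a)

/-- Winner of an agenda under a tournament: each internal node is won by
whichever child's winner beats the other; the root's candidate wins. -/
noncomputable def winner {α : Type} (T : α → α → Prop) : Agenda α → α
  | .leaf a => a
  | .node l r => if T (winner T l) (winner T r) then winner T l else winner T r

/-- Strict partial order: asymmetric and transitive. -/
def IsSPO {α : Type} (r : α → α → Prop) : Prop :=
  (∀ a b, r a b → ¬ r b a) ∧ (∀ a b c, r a b → r b c → r a c)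

/-- Strict total order. -/
def IsSTO {α : Type} (r : α → α → Prop) : Prop :=
  IsSPO r ∧ ∀ a b : α, a ≠ b → r a b ∨ r b a

/-- An (incomplete) weighted profile: a finite sequence of agents, each with a
positive weight and a strict partial order, the sum of weights being odd. -/
structure Profile (α : Type) where
  agents : List (ℕ × (α → α → Prop))
  pos : ∀ p ∈ agents, 0 < p.1
  spo : ∀ p ∈ agents, IsSPO p.2
  oddSum : Odd (agents.map Prod.fst).sum

/-- Total weight of agents preferring `a` to `b`. -/
noncomputable def prefWeight {α : Type} (P : Profile α) (a b : α) : ℕ :=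
  (P.agents.map (fun p => if p.2 a b then p.1 else 0)).sum

/-- The majority graph of a profile. -/
def maj {α : Type} (P : Profile α) (a b : α) : Prop :=
  prefWeight P b a < prefWeight P a b

/-- `Q` is a completion of `P`: same weights, each agent's partial order is
replaced by a strict total order extending it. -/
def IsCompletion {α : Type} (P Q : Profile α) : Prop :=
  List.Forall₂ (fun p q => p.1 = q.1 ∧ IsSTO q.2 ∧ ∀ a b, p.2 a b → q.2 a b)
    P.agents Q.agents

/-- `T` extends the (incomplete majority) graph `G`. -/
def Extends {α : Type} (G T : α → α → Prop) : Prop := ∀ a b, G a b → T a b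

/-- `A` wins some agenda under `T`. -/
def WinsSome {α : Type} [Fintype α] (T : α → α → Prop) (A : α) : Prop :=
  ∃ t : Agenda α, IsAgenda t ∧ winner T t = A

/-- `A` wins every agenda under `T`. -/
def WinsAll {α : Type} [Fintype α] (T : α → α → Prop) (A : α) : Prop :=
  ∀ t : Agenda α, IsAgenda t → winner T t = A

/-- `A` wins some balanced agenda under `T`. -/
def FWinsSome {α : Type} [Fintype α] (T : α → α → Prop) (A : α) : Prop :=
  ∃ t : Agenda α, IsAgenda t ∧ IsBalanced t ∧ winner T t = A

/-- `A` wins every balanced agenda under `T`. -/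
def FWinsAll {α : Type} [Fintype α] (T : α → α → Prop) (A : α) : Prop :=
  ∀ t : Agenda α, IsAgenda t → IsBalanced t → winner T t = A

/-- Weak possible winner of a profile. -/
def WPp {α : Type} [Fintype α] (P : Profile α) (A : α) : Prop :=
  ∃ Q : Profile α, IsCompletion P Q ∧ WinsSome (maj Q) A

/-- Strong possible winner of a profile. -/
def SPp {α : Type} [Fintype α] (P : Profile α) (A : α) : Prop :=
  ∀ Q : Profile α, IsCompletion P Q → WinsSome (maj Q) A

/-- Weak Condorcet winner of a profile. -/
def WCp {α : Type} [Fintype α] (P : Profile α) (A : α) : Prop :=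
  ∃ Q : Profile α, IsCompletion P Q ∧ WinsAll (maj Q) A

/-- Strong Condorcet winner of a profile. -/
def SCp {α : Type} [Fintype α] (P : Profile α) (A : α) : Prop :=
  ∀ Q : Profile α, IsCompletion P Q → WinsAll (maj Q) A

/-- Weak possible winner of an incomplete majority graph. -/
def WPg {α : Type} [Fintype α] (G : α → α → Prop) (A : α) : Prop :=
  ∃ T : α → α → Prop, IsTournament T ∧ Extends G T ∧ WinsSome T A

/-- Strong possible winner of an incomplete majority graph. -/
def SPg {α : Type} [Fintype α] (G : α → α → Prop) (A : α) : Prop :=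
  ∀ T : α → α → Prop, IsTournament T → Extends G T → WinsSome T A

/-- Weak Condorcet winner of an incomplete majority graph. -/
def WCg {α : Type} [Fintype α] (G : α → α → Prop) (A : α) : Prop :=
  ∃ T : α → α → Prop, IsTournament T ∧ Extends G T ∧ WinsAll T A

/-- Strong Condorcet winner of an incomplete majority graph. -/
def SCg {α : Type} [Fintype α] (G : α → α → Prop) (A : α) : Prop :=
  ∀ T : α → α → Prop, IsTournament T → Extends G T → WinsAll T A

/-- A profile is unweighted if every agent has weight 1. -/
def IsUnweighted {α : Type} (P : Profile α) : Prop :=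
  ∀ p ∈ P.agents, p.1 = 1

/-- `Q` is the unweighted profile corresponding to `P`: each agent of
weight `k` is replaced by `k` agents of weight 1 with the same order. -/
def IsUnwVersion {α : Type} (P Q : Profile α) : Prop :=
  Q.agents = P.agents.flatMap (fun p => List.replicate p.1 (1, p.2))

/-- Fair strong Condorcet winner of a profile (balanced agendas only). -/
def FSCp {α : Type} [Fintype α] (P : Profile α) (A : α) : Prop :=
  ∀ Q : Profile α, IsCompletion P Q → FWinsAll (maj Q) A

/-- Fair weak Condorcet winner of a profile (balanced agendas only). -/
def FWCp {α : Type} [Fintype α] (P : Profile α) (A : α) : Prop :=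
  ∃ Q : Profile α, IsCompletion P Q ∧ FWinsAll (maj Q) A

/-- Fair weak possible winner of a profile (balanced agendas only). -/
def FWPp {α : Type} [Fintype α] (P : Profile α) (A : α) : Prop :=
  ∃ Q : Profile α, IsCompletion P Q ∧ FWinsSome (maj Q) A

/-- The unweighting map on agent lists. -/
def unw {α : Type} (l : List (ℕ × (α → α → Prop))) : List (ℕ × (α → α → Prop)) :=
  l.flatMap (fun p => List.replicate p.1 (1, p.2))

lemma unw_mem {α : Type} {l : List (ℕ × (α → α → Prop))} {q} (h : q ∈ unw l) :
    q.1 = 1 ∧ ∃ p ∈ l, q.2 = p.2 := by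
  rcases List.mem_flatMap.1 h with ⟨p, hp, hq⟩
  rcases List.eq_of_mem_replicate hq with rfl
  exact ⟨rfl, p, hp, rfl⟩

lemma unw_weight_sum {α : Type} (l : List (ℕ × (α → α → Prop))) :
    ((unw l).map Prod.fst).sum = (l.map Prod.fst).sum := by
  induction l with
  | nil => rfl
  | cons p l ih =>
    simp only [unw, List.flatMap_cons, List.map_append, List.sum_append] at *
    rw [ih]
    simp [List.map_replicate]

lemma unw_prefWeight {α : Type} (l : List (ℕ × (α → α → Prop))) (a b : α) :
    ((unw l).map (fun p => if p.2 a b then p.1 else 0)).sum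
      = (l.map (fun p => if p.2 a b then p.1 else 0)).sum := by
  induction l with
  | nil => rfl
  | cons p l ih =>
    simp only [unw, List.flatMap_cons, List.map_append, List.sum_append] at *
    rw [ih]
    congr 1
    by_cases h : p.2 a b <;> simp [List.map_replicate, h]

lemma forall₂_unw {α : Type} {r : (ℕ × (α → α → Prop)) → (ℕ × (α → α → Prop)) → Prop}
    {l₁ l₂ : List (ℕ × (α → α → Prop))}
    (h : List.Forall₂ (fun p q => p.1 = q.1 ∧ r (1, p.2) (1, q.2)) l₁ l₂) :
    List.Forall₂ r (unw l₁) (unw l₂) := by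
  induction h with
  | nil => exact List.Forall₂.nil
  | @cons p q l₁ l₂ hpq _ ih =>
    refine List.rel_append ?_ ih
    show List.Forall₂ r (List.replicate p.1 (1, p.2)) (List.replicate q.1 (1, q.2))
    rw [← hpq.1]
    induction p.1 with
    | zero => exact List.Forall₂.nil
    | succ n ihn => exact List.Forall₂.cons hpq.2 ihn

/-- For an incomplete weighted profile `P` with corresponding
unweighted profile `U(P)`, `SP(U(P)) ⊆ SP(P)`. -/
theorem stmt12 {α : Type} [Fintype α] (P Q : Profile α) (hQ : IsUnwVersion P Q) :
    ∀ A : α, SPp Q A → SPp P A := by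
  intro A hA P' hP'
  -- build the unweighted version R of P'
  set R : Profile α :=
    { agents := unw P'.agents
      pos := by
        intro p hp
        rw [(unw_mem hp).1]; exact one_pos
      spo := by
        intro p hp
        rcases unw_mem hp with ⟨_, q, hq, he⟩
        rw [he]; exact (P'.spo q hq)
      oddSum := by rw [unw_weight_sum]; exact P'.oddSum } with hR
  have hcomp : IsCompletion Q R := by
    unfold IsCompletion
    rw [hR, hQ]
    show List.Forall₂ _ (unw P.agents) (unw P'.agents)
    apply forall₂_unw
    refine List.Forall₂.imp ?_ hP'
    rintro p q ⟨h1, h2, h3⟩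
    exact ⟨h1, rfl, h2, h3⟩
  have hmaj : ∀ a b, maj R a b ↔ maj P' a b := by
    intro a b
    unfold maj prefWeight
    show (((unw P'.agents).map _).sum < ((unw P'.agents).map _).sum) ↔ _
    rw [unw_prefWeight, unw_prefWeight]
  rcases hA R hcomp with ⟨t, ht, hw⟩
  refine ⟨t, ht, ?_⟩
  rw [← hw]
  clear hw ht
  induction t with
  | leaf a => rfl
  | node l r ihl ihr =>
    simp only [winner, ihl, ihr, hmaj]
end

section
/- Let P be an incomplete weighted profile over a finite set of candidates. Then the fair strong Condorcet winners coincide with the strong Condorcet winners: FSC(P) = SC(P). That is, a candidate wins every balanced agenda in every completion of P if and only if it wins every agenda in every completion of P. -/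
open scoped Classical

/-!
For an asymmetric relation `T` (such as a majority relation), a candidate `A` that wins every
balanced agenda must beat every other candidate, and such a Condorcet winner wins every agenda.
If `A` does not beat `B`, build a balanced agenda on the other candidates and graft `B` as the
sibling of a shallowest leaf; this keeps the agenda balanced, and relabelling that leaf as `A`
makes `A` meet `B` in the first round, so `A` cannot win.
-/

namespace Agenda

variable {α β : Type}

def map (f : α → β) : Agenda α → Agenda β
  | leaf a => leaf (f a)
  | node l r => node (l.map f) (r.map f)

@[simp]
lemma leaves_map (f : α → β) (t : Agenda α) : (t.map f).leaves = t.leaves.map f := by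
  induction t with
  | leaf a => rfl
  | node l r ihl ihr => simp [map, leaves, ihl, ihr]

@[simp]
lemma depths_map (f : α → β) (t : Agenda α) : (t.map f).depths = t.depths := by
  induction t with
  | leaf a => rfl
  | node l r ihl ihr => simp [map, depths, ihl, ihr]

lemma winner_map (T : β → β → Prop) (f : α → β) (t : Agenda α) :
    winner T (t.map f) = f (winner (fun a b => T (f a) (f b)) t) := by
  induction t with
  | leaf a => rfl
  | node l r ihl ihr => simp only [map, winner, ihl, ihr, apply_ite f]

lemma winner_mem_leaves (T : α → α → Prop) (t : Agenda α) : winner T t ∈ t.leaves := by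
  induction t with
  | leaf a => simp [winner, leaves]
  | node l r ihl ihr =>
    rw [winner, leaves]
    split
    · exact List.mem_append_left _ ihl
    · exact List.mem_append_right _ ihr

def minDepth : Agenda α → ℕ
  | leaf _ => 0
  | node l r => min l.minDepth r.minDepth + 1

def maxDepth : Agenda α → ℕ
  | leaf _ => 0
  | node l r => max l.maxDepth r.maxDepth + 1

lemma mem_Icc_of_mem_depths {t : Agenda α} {d : ℕ} (hd : d ∈ t.depths) :
    d ∈ Set.Icc t.minDepth t.maxDepth := by
  induction t generalizing d with
  | leaf a => simp_all [depths, minDepth, maxDepth]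
  | node l r ihl ihr =>
    simp only [depths, List.mem_map, List.mem_append] at hd
    obtain ⟨e, he | he, rfl⟩ := hd
    · have := ihl he; simp only [Set.mem_Icc, minDepth, maxDepth] at this ⊢; omega
    · have := ihr he; simp only [Set.mem_Icc, minDepth, maxDepth] at this ⊢; omega

lemma isBalanced_of_maxDepth_le {t : Agenda α} (h : t.maxDepth ≤ t.minDepth + 1) :
    IsBalanced t := fun d₁ h₁ d₂ h₂ => by
  have := mem_Icc_of_mem_depths h₁
  have := mem_Icc_of_mem_depths h₂
  simp only [Set.mem_Icc] at *
  omega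

def site : Agenda α → α
  | leaf a => a
  | node l r => if l.minDepth ≤ r.minDepth then l.site else r.site

def graft (x : α) : Agenda α → Agenda α
  | leaf a => node (leaf a) (leaf x)
  | node l r => if l.minDepth ≤ r.minDepth then node (l.graft x) r else node l (r.graft x)

lemma site_mem_leaves (t : Agenda α) : t.site ∈ t.leaves := by
  induction t with
  | leaf a => simp [site, leaves]
  | node l r ihl ihr =>
    rw [site, leaves]
    split
    · exact List.mem_append_left _ ihl
    · exact List.mem_append_right _ ihr

lemma leaves_graft_perm (x : α) (t : Agenda α) : (t.graft x).leaves.Perm (x :: t.leaves) := by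
  induction t with
  | leaf a => exact List.Perm.swap x a []
  | node l r ihl ihr =>
    rw [graft]
    split
    · exact ihl.append_right r.leaves
    · exact (ihr.append_left l.leaves).trans List.perm_middle

lemma minDepth_le_minDepth_graft (x : α) (t : Agenda α) : t.minDepth ≤ (t.graft x).minDepth := by
  induction t with
  | leaf a => simp [graft, minDepth]
  | node l r ihl ihr =>
    rw [graft]
    split <;> simp only [minDepth] <;> omega

lemma maxDepth_graft_le (x : α) (t : Agenda α) :
    (t.graft x).maxDepth ≤ max t.maxDepth (t.minDepth + 1) := by
  induction t with
  | leaf a => simp [graft, maxDepth, minDepth]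
  | node l r ihl ihr =>
    rw [graft]
    split <;> simp only [maxDepth, minDepth] at * <;> omega

lemma maxDepth_graft_le_minDepth_graft {t : Agenda α} (x : α)
    (h : t.maxDepth ≤ t.minDepth + 1) : (t.graft x).maxDepth ≤ (t.graft x).minDepth + 1 := by
  have := maxDepth_graft_le x t
  have := minDepth_le_minDepth_graft x t
  omega

lemma winner_graft_ne_site (T : α → α → Prop) {x : α} {t : Agenda α}
    (hnd : (t.graft x).leaves.Nodup) (hx : ¬ T t.site x) : winner T (t.graft x) ≠ t.site := by
  induction t with
  | leaf a =>
    have hxa : x ≠ a := by simpa [graft, leaves, eq_comm] using hnd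
    show (if T a x then a else x) ≠ a
    rwa [if_neg (show ¬ T a x from hx)]
  | node l r ihl ihr =>
    by_cases hlr : l.minDepth ≤ r.minDepth
    · simp only [graft, site, if_pos hlr] at hnd hx ⊢
      rw [leaves, List.nodup_append] at hnd
      have hr : winner T r ≠ l.site := fun h => hnd.2.2 _
        ((leaves_graft_perm x l).symm.subset (List.mem_cons_of_mem x (site_mem_leaves l))) _
        (winner_mem_leaves T r) h.symm
      rw [winner]
      split
      · exact ihl hnd.1 hx
      · exact hr
    · simp only [graft, site, if_neg hlr] at hnd hx ⊢
      rw [leaves, List.nodup_append] at hnd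
      have hl : winner T l ≠ r.site := fun h => hnd.2.2 _ (winner_mem_leaves T l) _
        ((leaves_graft_perm x r).symm.subset (List.mem_cons_of_mem x (site_mem_leaves r))) h
      rw [winner]
      split
      · exact hl
      · exact ihr hnd.2.1 hx

lemma leaves_foldr_graft_perm (a : α) (l : List α) :
    (l.foldr graft (leaf a)).leaves.Perm (a :: l) := by
  induction l with
  | nil => rfl
  | cons x l ih =>
    exact (leaves_graft_perm x _).trans ((ih.cons x).trans (List.Perm.swap a x l))

lemma maxDepth_foldr_graft_le (a : α) (l : List α) :
    (l.foldr graft (leaf a)).maxDepth ≤ (l.foldr graft (leaf a)).minDepth + 1 := by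
  induction l with
  | nil => simp [maxDepth]
  | cons x l ih => exact maxDepth_graft_le_minDepth_graft x ih

end Agenda

open Agenda

lemma IsAgenda.map_perm {α : Type} [Fintype α] {t : Agenda α} (ht : IsAgenda t)
    (σ : Equiv.Perm α) : IsAgenda (t.map σ) := by
  refine ⟨by simpa using ht.1.map σ.injective, fun a => ?_⟩
  simpa using ⟨σ.symm a, ht.2 _, σ.apply_symm_apply a⟩

lemma IsBalanced.map {α β : Type} {t : Agenda α} (ht : IsBalanced t) (f : α → β) :
    IsBalanced (t.map f) := by
  simpa [IsBalanced] using ht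

lemma exists_balanced_winner_ne {α : Type} [Fintype α] (T : α → α → Prop) {A B : α}
    (hBA : B ≠ A) (hAB : ¬ T A B) : ∃ t : Agenda α, IsAgenda t ∧ IsBalanced t ∧ winner T t ≠ A := by
  obtain ⟨c, cs, hothers⟩ : ∃ c cs, (Finset.univ.erase B).toList = c :: cs :=
    List.exists_cons_of_ne_nil <| mt Finset.toList_eq_nil.1
      (Finset.nonempty_iff_ne_empty.1 ⟨A, by simp [hBA.symm]⟩)
  set t₀ := cs.foldr graft (leaf c)
  have ht₀ : t₀.leaves.Perm (Finset.univ.erase B).toList :=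
    hothers ▸ leaves_foldr_graft_perm c cs
  have hsite : t₀.site ≠ B := by
    simpa using ht₀.subset (site_mem_leaves t₀)
  have hperm := (leaves_graft_perm B t₀).trans (ht₀.cons B)
  have hagenda : IsAgenda (t₀.graft B) := by
    refine ⟨hperm.nodup_iff.2 (by simpa using Finset.nodup_toList _), fun a => ?_⟩
    by_cases ha : a = B <;> simp [hperm.mem_iff, ha]
  set σ := Equiv.swap t₀.site A
  refine ⟨(t₀.graft B).map σ, hagenda.map_perm σ,
    (isBalanced_of_maxDepth_le (maxDepth_graft_le_minDepth_graft B
      (maxDepth_foldr_graft_le c cs))).map σ, ?_⟩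
  have hσB : σ B = B := Equiv.swap_apply_of_ne_of_ne hsite.symm hBA
  rw [winner_map, ← Equiv.swap_apply_left t₀.site A, σ.injective.ne_iff]
  refine winner_graft_ne_site _ hagenda.1 ?_
  simpa [σ, hσB] using hAB

lemma beats_of_fWinsAll {α : Type} [Fintype α] {T : α → α → Prop} {A : α} (h : FWinsAll T A)
    {B : α} (hBA : B ≠ A) : T A B := by
  by_contra hAB
  obtain ⟨t, ht, hbal, hne⟩ := exists_balanced_winner_ne T hBA hAB
  exact hne (h t ht hbal)

lemma winner_eq_of_beats {α : Type} {T : α → α → Prop} (hT : ∀ a b, T a b → ¬ T b a) {A : α}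
    (hA : ∀ B, B ≠ A → T A B) {t : Agenda α} (ht : A ∈ t.leaves) : winner T t = A := by
  induction t with
  | leaf a => simpa [leaves, winner, eq_comm] using ht
  | node l r ihl ihr =>
    rw [leaves, List.mem_append] at ht
    rw [winner]
    rcases ht with ht | ht
    · rw [ihl ht]
      by_cases hr : winner T r = A
      · simp [hr]
      · rw [if_pos (hA _ hr)]
    · rw [ihr ht]
      by_cases hl : winner T l = A
      · simp [hl]
      · rw [if_neg (hT _ _ (hA _ hl))]

theorem fWinsAll_iff_winsAll {α : Type} [Fintype α] {T : α → α → Prop}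
    (hT : ∀ a b, T a b → ¬ T b a) {A : α} : FWinsAll T A ↔ WinsAll T A :=
  ⟨fun h _ ht => winner_eq_of_beats hT (fun _ => beats_of_fWinsAll h) (ht.2 A),
    fun h t ht _ => h t ht⟩

/-- For an incomplete weighted profile `P`,
the fair strong Condorcet winners coincide with the strong Condorcet
winners: `FSC(P) = SC(P)`. -/
theorem stmt13 {α : Type} [Fintype α] (P : Profile α) :
    ∀ A : α, FSCp P A ↔ SCp P A :=
  fun _ => forall_congr' fun Q => imp_congr_right fun _ =>
    fWinsAll_iff_winsAll fun _ _ (h : maj Q _ _) => lt_asymm h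
end
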